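/- Every solution M of the model Riemann–Hilbert problem satisfies det M(z) = 1 for every z ∈ ℂ \ [a_1, b_N]. -/

import Mathlib

open Complex Filter Topology Asymptotics Bornology

noncomputable section

/-- The cut interval `[a₁, b_N]` viewed as a subset of the complex plane.
Here `a b : ℕ → ℝ` are 0-indexed, so `a 0 = a₁` and `b (N-1) = b_N`. -/
def cutSet (N : ℕ) (a b : ℕ → ℝ) : Set ℂ :=
  Complex.ofReal '' Set.Icc (a 0) (b (N - 1))

/-- The diagonal jump matrix `diag(e^{-2πiθ}, e^{2πiθ})` on the gaps. -/
def gapJump (θ : ℝ) : Matrix (Fin 2) (Fin 2) ℂ :=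
  !![Complex.exp (-(2 * Real.pi * θ) * Complex.I), 0;
     0, Complex.exp ((2 * Real.pi * θ) * Complex.I)]

/-- `M` is a solution of the model Riemann-Hilbert problem with data
`N`, endpoints `a 0 < b 0 < a 1 < b 1 < ⋯ < a (N-1) < b (N-1)`, and gap jump
parameters `β k` (the jump on the gap `(b k, a (k+1))` is `diag(e^{-2πiβₖ}, e^{2πiβₖ})`;
for the model problem of the paper one takes `β k = n * α k`). The conditions:
(a) every entry of `M` is analytic on `ℂ \ [a₁, b_N]`;
(b) `M` has continuous boundary values `M₊` (from the upper half-plane) and `M₋`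
(from the lower half-plane) on each open cut `(a k, b k)` and each open gap
`(b k, a (k+1))`, with `M₊ = M₋ * [[0,1],[-1,0]]` on the cuts and
`M₊ = M₋ * diag(e^{-2πiβₖ}, e^{2πiβₖ})` on the gaps;
(c) `M(z) = I + O(1/z)` as `z → ∞`;
(d) each entry of `M` is `O(|z - p|^{-1/4})` as `z → p` for each endpoint `p`. -/
def IsModelRHSolution (N : ℕ) (a b β : ℕ → ℝ)
    (M : ℂ → Matrix (Fin 2) (Fin 2) ℂ) : Prop :=
  (∀ i j, AnalyticOnNhd ℂ (fun z => M z i j) (cutSet N a b)ᶜ) ∧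
  (∀ k < N, ∀ x ∈ Set.Ioo (a k) (b k),
    ∃ Mp Mm : Matrix (Fin 2) (Fin 2) ℂ,
      Tendsto M (𝓝[{z : ℂ | 0 < z.im}] (x : ℂ)) (𝓝 Mp) ∧
      Tendsto M (𝓝[{z : ℂ | z.im < 0}] (x : ℂ)) (𝓝 Mm) ∧
      Mp = Mm * !![0, 1; -1, 0]) ∧
  (∀ k, k + 1 < N → ∀ x ∈ Set.Ioo (b k) (a (k + 1)),
    ∃ Mp Mm : Matrix (Fin 2) (Fin 2) ℂ,
      Tendsto M (𝓝[{z : ℂ | 0 < z.im}] (x : ℂ)) (𝓝 Mp) ∧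
      Tendsto M (𝓝[{z : ℂ | z.im < 0}] (x : ℂ)) (𝓝 Mm) ∧
      Mp = Mm * gapJump (β k)) ∧
  (∀ i j, (fun z : ℂ => M z i j - (1 : Matrix (Fin 2) (Fin 2) ℂ) i j)
      =O[Bornology.cobounded ℂ] fun z => z⁻¹) ∧
  (∀ k < N, ∀ p ∈ ({a k, b k} : Set ℝ), ∀ i j,
      (fun z => M z i j) =O[𝓝[(cutSet N a b)ᶜ] ((p : ℝ) : ℂ)]
        fun z => ‖z - (p : ℂ)‖ ^ (-(1 / 4) : ℝ))


section ModelRHAux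
open Set intervalIntegral

def RectInt (f : ℂ → ℂ) (x1 x2 y1 y2 : ℝ) : ℂ :=
  (∫ x : ℝ in x1..x2, f (x + y1 * I)) - (∫ x : ℝ in x1..x2, f (x + y2 * I)) +
    I • (∫ y : ℝ in y1..y2, f (x2 + y * I)) - I • ∫ y : ℝ in y1..y2, f (x1 + y * I)

lemma rectInt_eq (f : ℂ → ℂ) (x1 x2 y1 y2 : ℝ) :
    RectInt f x1 x2 y1 y2 =
      (∫ x : ℝ in (Complex.mk x1 y1).re..(Complex.mk x2 y2).re, f (x + (Complex.mk x1 y1).im * I)) -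
      (∫ x : ℝ in (Complex.mk x1 y1).re..(Complex.mk x2 y2).re, f (x + (Complex.mk x2 y2).im * I)) +
      I • (∫ y : ℝ in (Complex.mk x1 y1).im..(Complex.mk x2 y2).im, f ((Complex.mk x2 y2).re + y * I)) -
      I • ∫ y : ℝ in (Complex.mk x1 y1).im..(Complex.mk x2 y2).im, f ((Complex.mk x1 y1).re + y * I) := rfl

lemma rectInt_swap_y (f : ℂ → ℂ) (x1 x2 y1 y2 : ℝ) :
    RectInt f x1 x2 y1 y2 = - RectInt f x1 x2 y2 y1 := by
  simp only [RectInt, intervalIntegral.integral_symm y2 y1, smul_eq_mul]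
  ring

lemma rectInt_swap_x (f : ℂ → ℂ) (x1 x2 y1 y2 : ℝ) :
    RectInt f x1 x2 y1 y2 = - RectInt f x2 x1 y1 y2 := by
  simp only [RectInt, intervalIntegral.integral_symm x2 x1, smul_eq_mul]
  ring

lemma memU_of_mem_rect {x1 x2 y1 y2 x y : ℝ} (hx : x ∈ Set.Icc x1 x2) (hy : y ∈ Set.Icc y1 y2) :
    ((x : ℂ) + y * I) ∈ Set.Icc x1 x2 ×ℂ Set.Icc y1 y2 := by
  constructor <;> simp [hx, hy]

lemma vert_integrable {U : Set ℂ} {f : ℂ → ℂ}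
    (hc : ∀ z ∈ U, ContinuousAt f z) {x1 x2 y1 y2 : ℝ}
    (hsub : Set.Icc x1 x2 ×ℂ Set.Icc y1 y2 ⊆ U) {x : ℝ} (hx : x ∈ Set.Icc x1 x2)
    {c1 c2 : ℝ} (h1 : c1 ∈ Set.Icc y1 y2) (h2 : c2 ∈ Set.Icc y1 y2) :
    IntervalIntegrable (fun y : ℝ => f (x + y * I)) MeasureTheory.volume c1 c2 := by
  apply ContinuousOn.intervalIntegrable
  intro y hy
  have hy' : y ∈ Set.Icc y1 y2 := Set.uIcc_subset_Icc h1 h2 hy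
  have hmap : Continuous fun y : ℝ => (x : ℂ) + y * I := by fun_prop
  have h2' := ContinuousAt.comp (g := f) (f := fun y : ℝ => (x : ℂ) + y * I) (x := y)
    (hc _ (hsub (memU_of_mem_rect hx hy'))) hmap.continuousAt
  exact h2'.continuousWithinAt

lemma horiz_integrable {U : Set ℂ} {f : ℂ → ℂ}
    (hc : ∀ z ∈ U, ContinuousAt f z) {x1 x2 y1 y2 : ℝ}
    (hsub : Set.Icc x1 x2 ×ℂ Set.Icc y1 y2 ⊆ U) {y : ℝ} (hy : y ∈ Set.Icc y1 y2)
    {c1 c2 : ℝ} (h1 : c1 ∈ Set.Icc x1 x2) (h2 : c2 ∈ Set.Icc x1 x2) :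
    IntervalIntegrable (fun x : ℝ => f (x + y * I)) MeasureTheory.volume c1 c2 := by
  apply ContinuousOn.intervalIntegrable
  intro x hx
  have hx' : x ∈ Set.Icc x1 x2 := Set.uIcc_subset_Icc h1 h2 hx
  have hmap : Continuous fun x : ℝ => (x : ℂ) + (y : ℝ) * I := by fun_prop
  have h2' := ContinuousAt.comp (g := f) (f := fun x : ℝ => (x : ℂ) + (y : ℝ) * I) (x := x)
    (hc _ (hsub (memU_of_mem_rect hx' hy))) hmap.continuousAt
  exact h2'.continuousWithinAt

lemma rectZero_sorted {U : Set ℂ} {f : ℂ → ℂ}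
    (hc : ∀ z ∈ U, ContinuousAt f z) (hd : ∀ z ∈ U, z.im ≠ 0 → DifferentiableAt ℂ f z)
    {x1 x2 y1 y2 : ℝ} (hx : x1 ≤ x2) (hy : y1 ≤ y2)
    (hsub : Set.Icc x1 x2 ×ℂ Set.Icc y1 y2 ⊆ U) : RectInt f x1 x2 y1 y2 = 0 := by
  have key : ∀ c1 c2 : ℝ, y1 ≤ c1 → c1 ≤ c2 → c2 ≤ y2 → (0 ∉ Set.Ioo c1 c2) →
      RectInt f x1 x2 c1 c2 = 0 := by
    intro c1 c2 h1 h12 h2 h0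
    have hsub' : Set.Icc x1 x2 ×ℂ Set.Icc c1 c2 ⊆ U := fun z hz =>
      hsub ⟨hz.1, Set.Icc_subset_Icc h1 h2 hz.2⟩
    have := Complex.integral_boundary_rect_eq_zero_of_continuousOn_of_differentiableOn f
      (Complex.mk x1 c1) (Complex.mk x2 c2)
      (by
        rw [show (Complex.mk x1 c1).re = x1 from rfl, show (Complex.mk x2 c2).re = x2 from rfl,
          show (Complex.mk x1 c1).im = c1 from rfl, show (Complex.mk x2 c2).im = c2 from rfl,
          Set.uIcc_of_le hx, Set.uIcc_of_le h12]
        exact fun z hz => (hc z (hsub' hz)).continuousWithinAt)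
      (by
        rw [show (Complex.mk x1 c1).re = x1 from rfl, show (Complex.mk x2 c2).re = x2 from rfl,
          show (Complex.mk x1 c1).im = c1 from rfl, show (Complex.mk x2 c2).im = c2 from rfl,
          min_eq_left hx, max_eq_right hx, min_eq_left h12, max_eq_right h12]
        intro z hz
        have hz' : z ∈ U := hsub' ⟨Set.Ioo_subset_Icc_self hz.1, Set.Ioo_subset_Icc_self hz.2⟩
        have : z.im ≠ 0 := fun h => h0 (h ▸ hz.2)
        exact (hd z hz' this).differentiableWithinAt)
    rw [rectInt_eq]
    exact this
  rcases le_or_gt y2 0 with h | h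
  · exact key y1 y2 le_rfl hy le_rfl (fun h0 => (h0.2.trans_le h).false)
  rcases le_or_gt 0 y1 with h' | h'
  · exact key y1 y2 le_rfl hy le_rfl (fun h0 => (h0.1.trans_le h').false)
  · have k1 : RectInt f x1 x2 y1 0 = 0 :=
      key y1 0 le_rfl h'.le h.le (fun h0 => h0.2.false)
    have k2 : RectInt f x1 x2 0 y2 = 0 :=
      key 0 y2 h'.le h.le le_rfl (fun h0 => h0.1.false)
    have hy0 : (0:ℝ) ∈ Set.Icc y1 y2 := ⟨h'.le, h.le⟩
    have hyA : y1 ∈ Set.Icc y1 y2 := Set.left_mem_Icc.2 hy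
    have hyB : y2 ∈ Set.Icc y1 y2 := Set.right_mem_Icc.2 hy
    have hxA : x1 ∈ Set.Icc x1 x2 := Set.left_mem_Icc.2 hx
    have hxB : x2 ∈ Set.Icc x1 x2 := Set.right_mem_Icc.2 hx
    have s1 : (∫ y : ℝ in y1..(0:ℝ), f (x2 + y * I)) + (∫ y : ℝ in (0:ℝ)..y2, f (x2 + y * I))
        = ∫ y : ℝ in y1..y2, f (x2 + y * I) :=
      intervalIntegral.integral_add_adjacent_intervals
        (vert_integrable hc hsub hxB hyA hy0) (vert_integrable hc hsub hxB hy0 hyB)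
    have s2 : (∫ y : ℝ in y1..(0:ℝ), f (x1 + y * I)) + (∫ y : ℝ in (0:ℝ)..y2, f (x1 + y * I))
        = ∫ y : ℝ in y1..y2, f (x1 + y * I) :=
      intervalIntegral.integral_add_adjacent_intervals
        (vert_integrable hc hsub hxA hyA hy0) (vert_integrable hc hsub hxA hy0 hyB)
    have : RectInt f x1 x2 y1 y2 = RectInt f x1 x2 y1 0 + RectInt f x1 x2 0 y2 := by
      simp only [RectInt, smul_eq_mul, ← s1, ← s2]
      ring
    rw [this, k1, k2, add_zero]

lemma rectZero {U : Set ℂ} {f : ℂ → ℂ}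
    (hc : ∀ z ∈ U, ContinuousAt f z) (hd : ∀ z ∈ U, z.im ≠ 0 → DifferentiableAt ℂ f z)
    (x1 x2 y1 y2 : ℝ)
    (hsub : Set.uIcc x1 x2 ×ℂ Set.uIcc y1 y2 ⊆ U) : RectInt f x1 x2 y1 y2 = 0 := by
  rcases le_total x1 x2 with hx | hx <;> rcases le_total y1 y2 with hy | hy
  · rw [Set.uIcc_of_le hx, Set.uIcc_of_le hy] at hsub
    exact rectZero_sorted hc hd hx hy hsub
  · rw [Set.uIcc_of_le hx, Set.uIcc_of_ge hy] at hsub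
    rw [rectInt_swap_y, rectZero_sorted hc hd hx hy hsub, neg_zero]
  · rw [Set.uIcc_of_ge hx, Set.uIcc_of_le hy] at hsub
    rw [rectInt_swap_x, rectZero_sorted hc hd hx hy hsub, neg_zero]
  · rw [Set.uIcc_of_ge hx, Set.uIcc_of_ge hy] at hsub
    rw [rectInt_swap_x, rectInt_swap_y, rectZero_sorted hc hd hx hy hsub, neg_zero, neg_zero]

/-- The primitive of `f` along an L-shaped path from `c`. -/
def LPrim (f : ℂ → ℂ) (c : ℂ) (z : ℂ) : ℂ :=
  (∫ t : ℝ in c.re..z.re, f (t + c.im * I)) + I * ∫ s : ℝ in c.im..z.im, f (z.re + s * I)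

lemma lprim_sub {U : Set ℂ} {f : ℂ → ℂ}
    (hc : ∀ z ∈ U, ContinuousAt f z) (hd : ∀ z ∈ U, z.im ≠ 0 → DifferentiableAt ℂ f z)
    {c : ℂ} {s : ℝ}
    (hsub : Set.Icc (c.re - s) (c.re + s) ×ℂ Set.Icc (c.im - s) (c.im + s) ⊆ U)
    {z w : ℂ} (hz : z ∈ Set.Icc (c.re - s) (c.re + s) ×ℂ Set.Icc (c.im - s) (c.im + s))
    (hw : w ∈ Set.Icc (c.re - s) (c.re + s) ×ℂ Set.Icc (c.im - s) (c.im + s))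
    (hs : 0 ≤ s) :
    LPrim f c w - LPrim f c z =
      (∫ t : ℝ in z.re..w.re, f (t + z.im * I)) + I * ∫ t : ℝ in z.im..w.im, f (w.re + t * I) := by
  have hcre : c.re ∈ Set.Icc (c.re - s) (c.re + s) := by constructor <;> linarith
  have hcim : c.im ∈ Set.Icc (c.im - s) (c.im + s) := by constructor <;> linarith
  have e1 : (∫ t : ℝ in c.re..w.re, f (t + c.im * I)) - ∫ t : ℝ in c.re..z.re, f (t + c.im * I)
      = ∫ t : ℝ in z.re..w.re, f (t + c.im * I) :=
    intervalIntegral.integral_interval_sub_left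
      (horiz_integrable hc hsub hcim hcre hw.1) (horiz_integrable hc hsub hcim hcre hz.1)
  have e2 : (∫ t : ℝ in c.im..z.im, f (w.re + t * I)) + (∫ t : ℝ in z.im..w.im, f (w.re + t * I))
      = ∫ t : ℝ in c.im..w.im, f (w.re + t * I) :=
    intervalIntegral.integral_add_adjacent_intervals
      (vert_integrable hc hsub hw.1 hcim hz.2) (vert_integrable hc hsub hw.1 hz.2 hw.2)
  have e3 : RectInt f z.re w.re c.im z.im = 0 := by
    apply rectZero hc hd
    intro p hp
    exact hsub ⟨Set.uIcc_subset_Icc hz.1 hw.1 hp.1, Set.uIcc_subset_Icc hcim hz.2 hp.2⟩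
  simp only [RectInt, smul_eq_mul] at e3
  simp only [LPrim]
  linear_combination e1 + I * e2.symm + e3

lemma lprim_hasDerivAt {U : Set ℂ} {f : ℂ → ℂ}
    (hc : ∀ z ∈ U, ContinuousAt f z) (hd : ∀ z ∈ U, z.im ≠ 0 → DifferentiableAt ℂ f z)
    {c : ℂ} {s : ℝ} (hs : 0 < s)
    (hsub : Set.Icc (c.re - s) (c.re + s) ×ℂ Set.Icc (c.im - s) (c.im + s) ⊆ U)
    {z : ℂ} (hz : z ∈ Set.Ioo (c.re - s) (c.re + s) ×ℂ Set.Ioo (c.im - s) (c.im + s)) :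
    HasDerivAt (LPrim f c) (f z) z := by
  set Q : Set ℂ := Set.Ioo (c.re - s) (c.re + s) ×ℂ Set.Ioo (c.im - s) (c.im + s) with hQ
  have hQo : IsOpen Q := IsOpen.reProdIm isOpen_Ioo isOpen_Ioo
  have hQsub : Q ⊆ Set.Icc (c.re - s) (c.re + s) ×ℂ Set.Icc (c.im - s) (c.im + s) :=
    fun p hp => ⟨Set.Ioo_subset_Icc_self hp.1, Set.Ioo_subset_Icc_self hp.2⟩
  rw [hasDerivAt_iff_isLittleO]
  rw [Asymptotics.isLittleO_iff]
  intro c0 hc0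
  have hfz : ContinuousAt f z := hc z (hsub (hQsub hz))
  rcases Metric.continuousAt_iff.1 hfz (c0 / 2) (by linarith) with ⟨δ1, hδ1, hf⟩
  rcases Metric.isOpen_iff.1 hQo z hz with ⟨δ2, hδ2, hball⟩
  have hδ : 0 < min (δ1 / 2) δ2 := lt_min (by linarith) hδ2
  filter_upwards [Metric.ball_mem_nhds z hδ] with w hw
  have hwQ : w ∈ Q := hball (Metric.ball_subset_ball (min_le_right _ _) hw)
  have hwz : ‖w - z‖ < min (δ1 / 2) δ2 := by
    rw [← dist_eq_norm]; exact hw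
  have key := lprim_sub hc hd hsub (hQsub hz) (hQsub hwQ) hs.le
  -- rewrite the difference as integrals of f - f z
  have i1 : IntervalIntegrable (fun t : ℝ => f (t + z.im * I)) MeasureTheory.volume z.re w.re :=
    horiz_integrable hc hsub (Set.Ioo_subset_Icc_self hz.2) (Set.Ioo_subset_Icc_self hz.1)
      (Set.Ioo_subset_Icc_self hwQ.1)
  have i2 : IntervalIntegrable (fun t : ℝ => f (w.re + t * I)) MeasureTheory.volume z.im w.im :=
    vert_integrable hc hsub (Set.Ioo_subset_Icc_self hwQ.1) (Set.Ioo_subset_Icc_self hz.2)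
      (Set.Ioo_subset_Icc_self hwQ.2)
  have comb : LPrim f c w - LPrim f c z - (w - z) • f z =
      (∫ t : ℝ in z.re..w.re, (f (t + z.im * I) - f z)) +
        I * ∫ t : ℝ in z.im..w.im, (f (w.re + t * I) - f z) := by
    rw [intervalIntegral.integral_sub i1 intervalIntegrable_const,
      intervalIntegral.integral_sub i2 intervalIntegrable_const, key]
    simp only [intervalIntegral.integral_const, smul_eq_mul, Complex.real_smul]
    have hwzd : w - z = ((w.re - z.re : ℝ) : ℂ) + ((w.im - z.im : ℝ) : ℂ) * I := by
      simp [Complex.ext_iff]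
    rw [hwzd]; ring
  rw [comb]
  have b1 : ‖∫ t : ℝ in z.re..w.re, (f (t + z.im * I) - f z)‖ ≤ (c0 / 2) * |w.re - z.re| := by
    apply intervalIntegral.norm_integral_le_of_norm_le_const
    intro t ht
    have ht' : t ∈ Set.uIcc z.re w.re := Set.uIoc_subset_uIcc ht
    have hdist : dist ((t : ℂ) + z.im * I) z < δ1 := by
      have h1 : dist ((t : ℂ) + z.im * I) z = |t - z.re| := by
        rw [Complex.dist_eq]
        have : (t : ℂ) + z.im * I - z = ((t - z.re : ℝ) : ℂ) := by
          simp [Complex.ext_iff]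
        rw [this, Complex.norm_real, Real.norm_eq_abs]
      rw [h1]
      calc |t - z.re| ≤ |w.re - z.re| := abs_sub_left_of_mem_uIcc ht'
        _ = |(w - z).re| := by simp
        _ ≤ ‖w - z‖ := Complex.abs_re_le_norm _
        _ < min (δ1 / 2) δ2 := hwz
        _ ≤ δ1 := (min_le_left _ _).trans (by linarith)
    rw [← dist_eq_norm]
    exact (hf hdist).le
  have b2 : ‖∫ t : ℝ in z.im..w.im, (f (w.re + t * I) - f z)‖ ≤ (c0 / 2) * |w.im - z.im| := by
    apply intervalIntegral.norm_integral_le_of_norm_le_const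
    intro t ht
    have ht' : t ∈ Set.uIcc z.im w.im := Set.uIoc_subset_uIcc ht
    have hdist : dist ((w.re : ℂ) + t * I) z < δ1 := by
      have h1 : dist ((w.re : ℂ) + t * I) z ≤ |w.re - z.re| + |t - z.im| := by
        rw [Complex.dist_eq]
        have : (w.re : ℂ) + t * I - z = ((w.re - z.re : ℝ) : ℂ) + ((t - z.im : ℝ) : ℂ) * I := by
          simp [Complex.ext_iff]
        rw [this]
        refine (Complex.norm_le_abs_re_add_abs_im _).trans ?_
        simp
      have h2 : |t - z.im| ≤ |w.im - z.im| := abs_sub_left_of_mem_uIcc ht'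
      have h3 : |w.re - z.re| ≤ ‖w - z‖ := by
        have : |w.re - z.re| = |(w - z).re| := by simp
        rw [this]; exact Complex.abs_re_le_norm _
      have h4 : |w.im - z.im| ≤ ‖w - z‖ := by
        have : |w.im - z.im| = |(w - z).im| := by simp
        rw [this]; exact Complex.abs_im_le_norm _
      have h5 : ‖w - z‖ < δ1 / 2 := lt_of_lt_of_le hwz (min_le_left _ _)
      calc dist ((w.re : ℂ) + t * I) z ≤ |w.re - z.re| + |t - z.im| := h1
        _ ≤ ‖w - z‖ + ‖w - z‖ := add_le_add h3 (h2.trans h4)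
        _ < δ1 / 2 + δ1 / 2 := by exact add_lt_add h5 h5
        _ = δ1 := by ring
    rw [← dist_eq_norm]
    exact (hf hdist).le
  calc ‖(∫ t : ℝ in z.re..w.re, (f (t + z.im * I) - f z)) +
        I * ∫ t : ℝ in z.im..w.im, (f (w.re + t * I) - f z)‖
      ≤ ‖∫ t : ℝ in z.re..w.re, (f (t + z.im * I) - f z)‖ +
        ‖I * ∫ t : ℝ in z.im..w.im, (f (w.re + t * I) - f z)‖ := norm_add_le _ _
    _ = ‖∫ t : ℝ in z.re..w.re, (f (t + z.im * I) - f z)‖ +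
        ‖∫ t : ℝ in z.im..w.im, (f (w.re + t * I) - f z)‖ := by
          rw [norm_mul, Complex.norm_I, one_mul]
    _ ≤ (c0 / 2) * |w.re - z.re| + (c0 / 2) * |w.im - z.im| := add_le_add b1 b2
    _ ≤ (c0 / 2) * ‖w - z‖ + (c0 / 2) * ‖w - z‖ := by
        have h3 : |w.re - z.re| ≤ ‖w - z‖ := by
          have : |w.re - z.re| = |(w - z).re| := by simp
          rw [this]; exact Complex.abs_re_le_norm _
        have h4 : |w.im - z.im| ≤ ‖w - z‖ := by
          have : |w.im - z.im| = |(w - z).im| := by simp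
          rw [this]; exact Complex.abs_im_le_norm _
        have := hc0.le
        gcongr
    _ = c0 * ‖w - z‖ := by ring

/-- **Morera-type theorem**: a function continuous on an open set and complex differentiable
off the real axis is analytic on the whole set. -/
lemma analyticAt_of_differentiable_off_real_axis {U : Set ℂ} {f : ℂ → ℂ} (hU : IsOpen U)
    (hc : ∀ z ∈ U, ContinuousAt f z) (hd : ∀ z ∈ U, z.im ≠ 0 → DifferentiableAt ℂ f z) :
    ∀ z ∈ U, AnalyticAt ℂ f z := by
  intro c hcU
  rcases Metric.isOpen_iff.1 hU c hcU with ⟨ρ, hρ, hball⟩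
  set s := ρ / 3 with hsdef
  have hs : 0 < s := by positivity
  have hsub : Set.Icc (c.re - s) (c.re + s) ×ℂ Set.Icc (c.im - s) (c.im + s) ⊆ U := by
    intro p hp
    apply hball
    rw [Metric.mem_ball, Complex.dist_eq]
    calc ‖p - c‖ ≤ |(p - c).re| + |(p - c).im| := Complex.norm_le_abs_re_add_abs_im _
      _ ≤ s + s := by
          rcases hp with ⟨h1, h2⟩
          simp only [Set.mem_preimage, Set.mem_Icc, Complex.sub_re, Complex.sub_im] at *
          exact add_le_add (abs_le.2 ⟨by linarith, by linarith⟩) (abs_le.2 ⟨by linarith, by linarith⟩)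
      _ < ρ := by rw [hsdef]; linarith
  set Q : Set ℂ := Set.Ioo (c.re - s) (c.re + s) ×ℂ Set.Ioo (c.im - s) (c.im + s) with hQ
  have hQo : IsOpen Q := IsOpen.reProdIm isOpen_Ioo isOpen_Ioo
  have hcQ : c ∈ Q := by
    refine ⟨?_, ?_⟩ <;> simp only [Set.mem_preimage, Set.mem_Ioo] <;> constructor <;> linarith
  have hF : ∀ z ∈ Q, HasDerivAt (LPrim f c) (f z) z := fun z hz =>
    lprim_hasDerivAt hc hd hs hsub hz
  have hFd : DifferentiableOn ℂ (LPrim f c) Q := fun z hz =>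
    (hF z hz).differentiableAt.differentiableWithinAt
  have hFa : AnalyticOnNhd ℂ (LPrim f c) Q := hFd.analyticOnNhd hQo
  have hda : AnalyticOnNhd ℂ (deriv (LPrim f c)) Q := hFa.deriv
  refine (hda c hcQ).congr ?_
  filter_upwards [hQo.mem_nhds hcQ] with z hz
  exact ((hF z hz).deriv)


lemma neBot_upper (z : ℂ) (hz : 0 ≤ z.im) : (𝓝[{w : ℂ | 0 < w.im}] z).NeBot := by
  rw [← mem_closure_iff_nhdsWithin_neBot]
  have ht : Tendsto (fun t : ℝ => z + t * I) (𝓝[>] 0) (𝓝 z) := by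
    have h : Continuous (fun t : ℝ => z + t * I) := by fun_prop
    simpa using (h.tendsto 0).mono_left nhdsWithin_le_nhds
  refine mem_closure_of_tendsto ht ?_
  filter_upwards [self_mem_nhdsWithin] with t ht'
  simp only [Set.mem_setOf_eq, Complex.add_im, Complex.mul_im, Complex.ofReal_re, Complex.I_im,
    Complex.ofReal_im, Complex.I_re, mul_zero, mul_one, zero_mul, add_zero]
  have : (0:ℝ) < t := ht'
  linarith

lemma neBot_lower (z : ℂ) (hz : z.im ≤ 0) : (𝓝[{w : ℂ | w.im < 0}] z).NeBot := by
  rw [← mem_closure_iff_nhdsWithin_neBot]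
  have ht : Tendsto (fun t : ℝ => z - t * I) (𝓝[>] 0) (𝓝 z) := by
    have h : Continuous (fun t : ℝ => z - t * I) := by fun_prop
    simpa using (h.tendsto 0).mono_left nhdsWithin_le_nhds
  refine mem_closure_of_tendsto ht ?_
  filter_upwards [self_mem_nhdsWithin] with t ht'
  simp only [Set.mem_setOf_eq, Complex.sub_im, Complex.mul_im, Complex.ofReal_re, Complex.I_im,
    Complex.ofReal_im, Complex.I_re, mul_zero, mul_one, zero_mul, add_zero]
  have : (0:ℝ) < t := ht'
  linarith

lemma limUnder_upper_eq {d : ℂ → ℂ} {z : ℂ} (hz : z.im = 0) {v : ℂ}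
    (h : Tendsto d (𝓝[{w : ℂ | 0 < w.im}] z) (𝓝 v)) :
    limUnder (𝓝[{w : ℂ | 0 < w.im}] z) d = v := by
  haveI := neBot_upper z hz.ge
  exact h.limUnder_eq


lemma continuousAt_glue {d g : ℂ → ℂ} {l r : ℝ}
    (hgu : ∀ z : ℂ, z.im = 0 → g z = limUnder (𝓝[{w : ℂ | 0 < w.im}] z) d)
    (hgd : ∀ z : ℂ, z.im ≠ 0 → g z = d z)
    (hP : ∀ u : ℝ, u ∈ Set.Ioo l r → ∃ v : ℂ,
      Tendsto d (𝓝[{w : ℂ | 0 < w.im}] (u : ℂ)) (𝓝 v) ∧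
      Tendsto d (𝓝[{w : ℂ | w.im < 0}] (u : ℂ)) (𝓝 v))
    {x : ℝ} (hx : x ∈ Set.Ioo l r) : ContinuousAt g (x : ℂ) := by
  obtain ⟨v, hvu, hvl⟩ := hP x hx
  have hgx : g (x : ℂ) = v := by
    rw [hgu _ (by simp)]
    exact limUnder_upper_eq (by simp) hvu
  rw [Metric.continuousAt_iff]
  intro ε hε
  rw [Metric.tendsto_nhdsWithin_nhds] at hvu hvl
  obtain ⟨δu, hδu, hu⟩ := hvu (ε/2) (by linarith)
  obtain ⟨δl, hδl, hl⟩ := hvl (ε/2) (by linarith)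
  have hδ : 0 < min (min δu δl) (min (x - l) (r - x)) := by
    rcases hx with ⟨h1, h2⟩
    refine lt_min (lt_min hδu hδl) (lt_min (by linarith) (by linarith))
  set δ := min (min δu δl) (min (x - l) (r - x)) with hδdef
  refine ⟨δ/2, by positivity, ?_⟩
  intro u hu'
  have hδu' : δ ≤ δu := (min_le_left _ _).trans (min_le_left _ _)
  have hδl' : δ ≤ δl := (min_le_left _ _).trans (min_le_right _ _)
  have hδx : δ ≤ min (x - l) (r - x) := min_le_right _ _
  have hclaim : dist (g u) v ≤ ε / 2 := by
    rcases eq_or_ne u.im 0 with him | him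
    · have hux : u = ((u.re : ℝ) : ℂ) := Complex.ext (by simp) (by simp [him])
      have hre : |u.re - x| < δ/2 := by
        calc |u.re - x| = |(u - (x:ℂ)).re| := by simp
          _ ≤ ‖u - (x:ℂ)‖ := Complex.abs_re_le_norm _
          _ = dist u (x:ℂ) := (Complex.dist_eq _ _).symm
          _ < δ/2 := hu'
      have habs := abs_lt.1 hre
      have hmem : u.re ∈ Set.Ioo l r := by
        constructor
        · have : δ ≤ x - l := hδx.trans (min_le_left _ _)
          linarith [habs.1, hδ]
        · have : δ ≤ r - x := hδx.trans (min_le_right _ _)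
          linarith [habs.2, hδ]
      obtain ⟨v', hvu', hvl'⟩ := hP u.re hmem
      have hgu' : g u = v' := by
        rw [hux, hgu _ (by simp)]
        exact limUnder_upper_eq (by simp) hvu'
      rw [hgu']
      have hev : ∀ᶠ w in 𝓝[{w : ℂ | 0 < w.im}] ((u.re : ℝ) : ℂ), dist (d w) v ≤ ε/2 := by
        have hball : Metric.ball ((u.re : ℝ) : ℂ) (δ/2) ∈ 𝓝[{w : ℂ | 0 < w.im}] ((u.re:ℝ):ℂ) :=
          nhdsWithin_le_nhds (Metric.ball_mem_nhds _ (by positivity))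
        filter_upwards [hball, self_mem_nhdsWithin] with w hw1 hw2
        refine le_of_lt (hu hw2 ?_)
        have h1 : dist w ((u.re:ℝ):ℂ) < δ/2 := hw1
        have h2 : dist ((u.re:ℝ):ℂ) ((x:ℝ):ℂ) < δ/2 := by
          rw [Complex.isometry_ofReal.dist_eq, Real.dist_eq]
          exact hre
        calc dist w ((x:ℝ):ℂ) ≤ dist w ((u.re:ℝ):ℂ) + dist ((u.re:ℝ):ℂ) ((x:ℝ):ℂ) :=
              dist_triangle _ _ _
          _ < δ/2 + δ/2 := add_lt_add h1 h2
          _ = δ := by ring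
          _ ≤ δu := hδu'
      haveI := neBot_upper ((u.re : ℝ) : ℂ) (by simp)
      have hlim : Tendsto (fun w => dist (d w) v) (𝓝[{w : ℂ | 0 < w.im}] ((u.re:ℝ):ℂ))
          (𝓝 (dist v' v)) := hvu'.dist tendsto_const_nhds
      exact le_of_tendsto hlim hev
    · rw [hgd u him]
      rcases him.lt_or_gt with hneg | hpos
      · refine le_of_lt (hl (show u ∈ {w : ℂ | w.im < 0} from hneg) ?_)
        calc dist u ((x:ℝ):ℂ) < δ/2 := hu'
          _ ≤ δl := by linarith [hδl', hδ]
      · refine le_of_lt (hu (show u ∈ {w : ℂ | 0 < w.im} from hpos) ?_)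
        calc dist u ((x:ℝ):ℂ) < δ/2 := hu'
          _ ≤ δu := by linarith [hδu', hδ]
  calc dist (g u) (g (x:ℂ)) = dist (g u) v := by rw [hgx]
    _ ≤ ε/2 := hclaim
    _ < ε := by linarith

lemma mono_ab {N : ℕ} {a b : ℕ → ℝ} (hab : ∀ k < N, a k < b k)
    (hba : ∀ k, k + 1 < N → b k < a (k + 1)) :
    ∀ k, k < N → ∀ j, j ≤ k → a j ≤ a k ∧ b j ≤ b k := by
  intro k
  induction k with
  | zero => intro _ j hj; interval_cases j; exact ⟨le_rfl, le_rfl⟩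
  | succ n ih =>
    intro hk j hj
    rcases Nat.eq_or_lt_of_le hj with rfl | hj'
    · exact ⟨le_rfl, le_rfl⟩
    · have hjn : j ≤ n := Nat.lt_succ_iff.1 hj'
      have hnN : n < N := Nat.lt_of_succ_lt hk
      obtain ⟨h1, h2⟩ := ih hnN j hjn
      have h3 : b n < a (n + 1) := hba n hk
      have h4 : a (n + 1) < b (n + 1) := hab (n + 1) hk
      exact ⟨by linarith [hab n hnN], by linarith⟩

lemma locate {N : ℕ} (hN : 1 ≤ N) {a b : ℕ → ℝ} (hab : ∀ k < N, a k < b k)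
    (hba : ∀ k, k + 1 < N → b k < a (k + 1)) {x : ℝ}
    (hx : x ∈ Set.Icc (a 0) (b (N - 1))) (hend : ∀ k < N, x ≠ a k ∧ x ≠ b k) :
    (∃ k < N, x ∈ Set.Ioo (a k) (b k)) ∨ (∃ k, k + 1 < N ∧ x ∈ Set.Ioo (b k) (a (k + 1))) := by
  classical
  have h0 : a 0 < x := lt_of_le_of_ne hx.1 (Ne.symm (hend 0 hN).1)
  set k := Nat.findGreatest (fun k => a k < x) (N - 1) with hkdef
  have hk_spec : a k < x := Nat.findGreatest_spec (P := fun k => a k < x) (Nat.zero_le _) h0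
  have hkN1 : k ≤ N - 1 := Nat.findGreatest_le _
  have hkN : k < N := by omega
  rcases (hend k hkN).2.lt_or_gt with hlt | hgt
  · exact Or.inl ⟨k, hkN, hk_spec, hlt⟩
  · right
    have hk1N : k + 1 < N := by
      by_contra h
      have : k = N - 1 := by omega
      rw [this] at hgt
      linarith [hx.2]
    refine ⟨k, hk1N, hgt, ?_⟩
    have hk1 : ¬ (a (k + 1) < x) :=
      Nat.findGreatest_is_greatest (P := fun j => a j < x) (n := N - 1) (k := k + 1)
        (by rw [← hkdef]; omega) (by omega)
    exact lt_of_le_of_ne (not_lt.1 hk1) (hend (k + 1) hk1N).1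


end ModelRHAux

/-- Every solution `M` of the model Riemann-Hilbert problem satisfies
`det M(z) = 1` for every `z ∈ ℂ \ [a₁, b_N]`. -/
theorem model_RH_det_eq_one (N : ℕ) (hN : 1 ≤ N) (a b α : ℕ → ℝ) (n : ℤ)
    (hab : ∀ k < N, a k < b k) (hba : ∀ k, k + 1 < N → b k < a (k + 1))
    (M : ℂ → Matrix (Fin 2) (Fin 2) ℂ)
    (hM : IsModelRHSolution N a b (fun k => (n : ℝ) * α k) M) :
    ∀ z ∈ (cutSet N a b)ᶜ, (M z).det = 1 := by
  classical
  obtain ⟨hA, hcut, hgap, hinf, hend⟩ := hM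
  set L : Set ℂ := cutSet N a b with hLdef
  set d : ℂ → ℂ := fun z => (M z).det with hddef
  have hdet2 : d = fun z => M z 0 0 * M z 1 1 - M z 0 1 * M z 1 0 :=
    funext fun z => Matrix.det_fin_two _
  have hmemL : ∀ z : ℂ, z ∈ L ↔ (z.im = 0 ∧ z.re ∈ Set.Icc (a 0) (b (N - 1))) := by
    intro z
    constructor
    · rintro ⟨x, hx, rfl⟩
      exact ⟨by simp, by simpa using hx⟩
    · rintro ⟨h1, h2⟩
      exact ⟨z.re, h2, (Complex.ext (by simp) (by simp [h1])).symm⟩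
  have hLclosed : IsClosed L := (isCompact_Icc.image Complex.continuous_ofReal).isClosed
  have hLopen : IsOpen Lᶜ := hLclosed.isOpen_compl
  have hd_an : ∀ z ∈ Lᶜ, AnalyticAt ℂ d z := by
    intro z hz
    rw [hdet2]
    exact ((hA 0 0 z hz).mul (hA 1 1 z hz)).sub ((hA 0 1 z hz).mul (hA 1 0 z hz))
  have hd_diff : ∀ z ∈ Lᶜ, DifferentiableAt ℂ d z := fun z hz => (hd_an z hz).differentiableAt
  -- the set of endpoints
  set Send : Finset ℂ := ((Finset.range N).image fun k => ((a k : ℝ) : ℂ)) ∪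
      ((Finset.range N).image fun k => ((b k : ℝ) : ℂ)) with hSenddef
  have hSmem : ∀ z : ℂ, z ∈ Send ↔ ∃ k < N, z = ((a k : ℝ) : ℂ) ∨ z = ((b k : ℝ) : ℂ) := by
    intro z
    rw [hSenddef]
    simp only [Finset.mem_union, Finset.mem_image, Finset.mem_range]
    constructor
    · rintro (⟨k, hk, hkz⟩ | ⟨k, hk, hkz⟩)
      exacts [⟨k, hk, Or.inl hkz.symm⟩, ⟨k, hk, Or.inr hkz.symm⟩]
    · rintro ⟨k, hk, (rfl | rfl)⟩
      exacts [Or.inl ⟨k, hk, rfl⟩, Or.inr ⟨k, hk, rfl⟩]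
  have hSfin : (↑Send : Set ℂ).Finite := Send.finite_toSet
  have hScl : IsClosed (↑Send : Set ℂ) := hSfin.isClosed
  have hSsubL : (↑Send : Set ℂ) ⊆ L := by
    intro z hz
    rw [Finset.mem_coe, hSmem] at hz
    obtain ⟨k, hk, hz⟩ := hz
    have h1 : a 0 ≤ a k := (mono_ab hab hba k hk 0 (Nat.zero_le _)).1
    have h2 : b k ≤ b (N - 1) := (mono_ab hab hba (N - 1) (by omega) k (by omega)).2
    have h3 : a k < b k := hab k hk
    rcases hz with rfl | rfl <;> rw [hmemL] <;>
      refine ⟨by simp, by simp; constructor <;> linarith⟩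
  -- boundary limits of the determinant on open cuts and gaps
  have hdetJ1 : (!![0, 1; -1, 0] : Matrix (Fin 2) (Fin 2) ℂ).det = 1 := by
    simp [Matrix.det_fin_two_of]
  have hdetJ2 : ∀ θ : ℝ, (gapJump θ).det = 1 := by
    intro θ
    rw [gapJump, Matrix.det_fin_two_of, ← Complex.exp_add]
    simp
  have hdtend : ∀ (Mv : Matrix (Fin 2) (Fin 2) ℂ) (lf : Filter ℂ), Tendsto M lf (𝓝 Mv) →
      Tendsto d lf (𝓝 Mv.det) := by
    intro Mv lf hM
    exact ((Continuous.matrix_det continuous_id).tendsto Mv).comp hM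
  have hPcut : ∀ k, k < N → ∀ u ∈ Set.Ioo (a k) (b k), ∃ v : ℂ,
      Tendsto d (𝓝[{w : ℂ | 0 < w.im}] (u : ℂ)) (𝓝 v) ∧
      Tendsto d (𝓝[{w : ℂ | w.im < 0}] (u : ℂ)) (𝓝 v) := by
    intro k hk u hu
    obtain ⟨Mp, Mm, hMp, hMm, hrel⟩ := hcut k hk u hu
    refine ⟨Mp.det, hdtend Mp _ hMp, ?_⟩
    have : Mp.det = Mm.det := by rw [hrel, Matrix.det_mul, hdetJ1, mul_one]
    rw [this]
    exact hdtend Mm _ hMm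
  have hPgap : ∀ k, k + 1 < N → ∀ u ∈ Set.Ioo (b k) (a (k + 1)), ∃ v : ℂ,
      Tendsto d (𝓝[{w : ℂ | 0 < w.im}] (u : ℂ)) (𝓝 v) ∧
      Tendsto d (𝓝[{w : ℂ | w.im < 0}] (u : ℂ)) (𝓝 v) := by
    intro k hk u hu
    obtain ⟨Mp, Mm, hMp, hMm, hrel⟩ := hgap k hk u hu
    refine ⟨Mp.det, hdtend Mp _ hMp, ?_⟩
    have : Mp.det = Mm.det := by rw [hrel, Matrix.det_mul, hdetJ2, mul_one]
    rw [this]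
    exact hdtend Mm _ hMm
  have hP : ∀ u : ℝ, (u : ℂ) ∈ L → (u : ℂ) ∉ (↑Send : Set ℂ) → ∃ v : ℂ,
      Tendsto d (𝓝[{w : ℂ | 0 < w.im}] (u : ℂ)) (𝓝 v) ∧
      Tendsto d (𝓝[{w : ℂ | w.im < 0}] (u : ℂ)) (𝓝 v) := by
    intro u huL huS
    have hend' : ∀ k < N, u ≠ a k ∧ u ≠ b k := by
      intro k hk
      constructor <;> intro hequ <;> apply huS <;> rw [Finset.mem_coe, hSmem]
      exacts [⟨k, hk, Or.inl (by rw [hequ])⟩, ⟨k, hk, Or.inr (by rw [hequ])⟩]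
    have hu2 := (hmemL _).1 huL
    rcases locate hN hab hba (by simpa using hu2.2) hend' with ⟨k, hk, hIoo⟩ | ⟨k, hk, hIoo⟩
    · exact hPcut k hk u hIoo
    · exact hPgap k hk u hIoo
  -- the extension g of d across the open cuts and gaps
  set g : ℂ → ℂ := fun z => if z.im = 0 then limUnder (𝓝[{w : ℂ | 0 < w.im}] z) d else d z
    with hgdef
  have hgu : ∀ z : ℂ, z.im = 0 → g z = limUnder (𝓝[{w : ℂ | 0 < w.im}] z) d :=
    fun z hz => if_pos hz
  have hgnr : ∀ z : ℂ, z.im ≠ 0 → g z = d z := fun z hz => if_neg hz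
  have hgd : ∀ z ∈ Lᶜ, g z = d z := by
    intro z hz
    rcases eq_or_ne z.im 0 with h0 | h0
    · rw [hgu z h0]
      haveI := neBot_upper z h0.ge
      exact ((hd_diff z hz).continuousAt.continuousWithinAt).limUnder_eq
    · exact hgnr z h0
  have hg_ev : ∀ z ∈ Lᶜ, g =ᶠ[𝓝 z] d := fun z hz =>
    Filter.eventually_of_mem (hLopen.mem_nhds hz) hgd
  have hgcont : ∀ z ∈ (↑Send : Set ℂ)ᶜ, ContinuousAt g z := by
    intro z hz
    by_cases hzL : z ∈ L
    · have h2 := (hmemL _).1 hzL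
      have hzre : z = ((z.re : ℝ) : ℂ) := (Complex.ext (by simp) (by simp [h2.1])).symm
      have hend' : ∀ k < N, z.re ≠ a k ∧ z.re ≠ b k := by
        intro k hk
        constructor <;> intro hequ <;> apply hz <;> rw [Finset.mem_coe, hSmem]
        exacts [⟨k, hk, Or.inl (by rw [← hequ]; exact hzre)⟩,
          ⟨k, hk, Or.inr (by rw [← hequ]; exact hzre)⟩]
      rw [hzre]
      rcases locate hN hab hba (by simpa using h2.2) hend' with ⟨k, hk, hIoo⟩ | ⟨k, hk, hIoo⟩
      · exact continuousAt_glue hgu hgnr (hPcut k hk) hIoo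
      · exact continuousAt_glue hgu hgnr (hPgap k hk) hIoo
    · exact ((hd_diff z hzL).continuousAt).congr (hg_ev z hzL).symm
  have hg_an : ∀ z ∈ (↑Send : Set ℂ)ᶜ, AnalyticAt ℂ g z := by
    intro z hz
    by_cases hzL : z ∈ L
    · obtain ⟨ρ, hρ, hball⟩ := Metric.isOpen_iff.1 hScl.isOpen_compl z hz
      refine analyticAt_of_differentiable_off_real_axis Metric.isOpen_ball
        (fun u hu => hgcont u (hball hu)) ?_ z (Metric.mem_ball_self hρ)
      intro u _ him
      have huL : u ∉ L := fun hc => him ((hmemL u).1 hc).1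
      exact ((hg_ev u huL).differentiableAt_iff).2 (hd_diff u huL)
    · exact (hd_an z hzL).congr (hg_ev z hzL).symm
  -- bound near the endpoints, and the removable singularity estimate
  have hgbound : ∀ p ∈ Send, (fun z => g z - g p) =o[𝓝[≠] p] fun z : ℂ => (z - p)⁻¹ := by
    intro p hpS
    obtain ⟨k, hk, hpk⟩ := (hSmem p).1 hpS
    have hpreal : ∃ pr : ℝ, pr ∈ ({a k, b k} : Set ℝ) ∧ p = ((pr : ℝ) : ℂ) := by
      rcases hpk with rfl | rfl
      exacts [⟨a k, Or.inl rfl, rfl⟩, ⟨b k, Or.inr rfl, rfl⟩]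
    obtain ⟨pr, hprmem, rfl⟩ := hpreal
    have hpS' : ((pr : ℝ) : ℂ) ∈ (↑Send : Set ℂ) := by exact_mod_cast hpS
    have hpL : ((pr : ℝ) : ℂ) ∈ L := hSsubL hpS'
    have hent := fun i j => hend k hk pr hprmem i j
    have hprod : d =O[𝓝[Lᶜ] ((pr : ℝ) : ℂ)]
        fun z => ‖z - ((pr : ℝ) : ℂ)‖ ^ (-(1/2) : ℝ) := by
      have h1 := ((hent 0 0).mul (hent 1 1)).sub ((hent 0 1).mul (hent 1 0))
      have hEq : (fun z : ℂ => ‖z - ((pr : ℝ) : ℂ)‖ ^ (-(1 / 4) : ℝ) *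
            ‖z - ((pr : ℝ) : ℂ)‖ ^ (-(1 / 4) : ℝ)) =ᶠ[𝓝[Lᶜ] ((pr : ℝ) : ℂ)]
          (fun z : ℂ => ‖z - ((pr : ℝ) : ℂ)‖ ^ (-(1/2) : ℝ)) := by
        filter_upwards [self_mem_nhdsWithin] with z hz
        have hzne : z ≠ ((pr : ℝ) : ℂ) := fun hzeq => hz (hzeq ▸ hpL)
        have hpos : 0 < ‖z - ((pr : ℝ) : ℂ)‖ := by
          rw [norm_pos_iff]; exact sub_ne_zero.2 hzne
        rw [← Real.rpow_add hpos]
        norm_num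
      rw [hdet2]
      exact h1.trans hEq.isBigO
    obtain ⟨C, hC, hCb⟩ := hprod.exists_pos
    rw [Asymptotics.isBigOWith_iff] at hCb
    obtain ⟨δ0, hδ0, hb0⟩ := Metric.mem_nhdsWithin_iff.1 hCb
    have hopen2 : IsOpen ((↑Send : Set ℂ) \ {((pr : ℝ) : ℂ)})ᶜ :=
      (hSfin.subset Set.diff_subset).isClosed.isOpen_compl
    obtain ⟨δ2, hδ2, hball2⟩ := Metric.isOpen_iff.1 hopen2 ((pr : ℝ) : ℂ) (by simp)
    have hb0' : ∀ w : ℂ, w ∈ Metric.ball ((pr : ℝ) : ℂ) δ0 → w ∈ Lᶜ →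
        ‖d w‖ ≤ C * ‖w - ((pr : ℝ) : ℂ)‖ ^ (-(1/2) : ℝ) := by
      intro w hw1 hw2
      have hthis := hb0 ⟨hw1, hw2⟩
      have hnn : (0:ℝ) ≤ ‖w - ((pr : ℝ) : ℂ)‖ ^ (-(1/2) : ℝ) :=
        Real.rpow_nonneg (norm_nonneg _) _
      simp only [Set.mem_setOf_eq] at hthis
      rw [Real.norm_eq_abs, _root_.abs_of_nonneg hnn] at hthis
      exact hthis
    -- uniform bound for g on a punctured neighborhood of p
    have hgev : ∀ᶠ z in 𝓝[≠] ((pr : ℝ) : ℂ),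
        ‖g z‖ ≤ C * ‖z - ((pr : ℝ) : ℂ)‖ ^ (-(1/2) : ℝ) := by
      have hballmem : Metric.ball ((pr : ℝ) : ℂ) (min δ0 δ2) ∈ 𝓝[≠] ((pr : ℝ) : ℂ) :=
        nhdsWithin_le_nhds (Metric.ball_mem_nhds _ (lt_min hδ0 hδ2))
      filter_upwards [hballmem, self_mem_nhdsWithin] with z hzball hzne'
      have hzne : z ≠ ((pr : ℝ) : ℂ) := hzne'
      by_cases hzL : z ∈ L
      · have hzS : z ∉ (↑Send : Set ℂ) := by
          intro hc
          exact (hball2 (Metric.ball_subset_ball (min_le_right _ _) hzball))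
            ⟨hc, by simpa using hzne⟩
        have him : z.im = 0 := ((hmemL z).1 hzL).1
        have hzre : z = ((z.re : ℝ) : ℂ) := (Complex.ext (by simp) (by simp [him])).symm
        obtain ⟨v, hvu, hvl⟩ := hP z.re (by rw [← hzre]; exact hzL) (by rw [← hzre]; exact hzS)
        have hgz : g z = v := by
          rw [hgu z him, hzre]
          exact limUnder_upper_eq (by simp) hvu
        rw [hgz]
        haveI := neBot_upper ((z.re : ℝ) : ℂ) (by simp)
        have hnorm : Tendsto (fun w => ‖d w‖) (𝓝[{w : ℂ | 0 < w.im}] ((z.re : ℝ) : ℂ))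
            (𝓝 ‖v‖) := hvu.norm
        have hcont : ContinuousAt (fun w : ℂ => C * ‖w - ((pr : ℝ) : ℂ)‖ ^ (-(1/2) : ℝ)) z := by
          have hznorm : 0 < ‖z - ((pr : ℝ) : ℂ)‖ := by
            rw [norm_pos_iff]; exact sub_ne_zero.2 hzne
          have h1 : ContinuousAt (fun w : ℂ => ‖w - ((pr : ℝ) : ℂ)‖) z := by fun_prop
          have h2 : ContinuousAt (fun t : ℝ => t ^ (-(1/2) : ℝ)) ‖z - ((pr : ℝ) : ℂ)‖ :=
            Real.continuousAt_rpow_const _ _ (Or.inl hznorm.ne')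
          exact continuousAt_const.mul
            (ContinuousAt.comp (g := fun t : ℝ => t ^ (-(1/2) : ℝ))
              (f := fun w : ℂ => ‖w - ((pr : ℝ) : ℂ)‖) (x := z) h2 h1)
        have hrhs : Tendsto (fun w : ℂ => C * ‖w - ((pr : ℝ) : ℂ)‖ ^ (-(1/2) : ℝ))
            (𝓝[{w : ℂ | 0 < w.im}] ((z.re : ℝ) : ℂ))
            (𝓝 (C * ‖z - ((pr : ℝ) : ℂ)‖ ^ (-(1/2) : ℝ))) := by
          rw [← hzre]
          exact hcont.continuousWithinAt
        have hevb : ∀ᶠ w in 𝓝[{w : ℂ | 0 < w.im}] ((z.re : ℝ) : ℂ),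
            ‖d w‖ ≤ C * ‖w - ((pr : ℝ) : ℂ)‖ ^ (-(1/2) : ℝ) := by
          have hzball0 : z ∈ Metric.ball ((pr : ℝ) : ℂ) δ0 :=
            Metric.ball_subset_ball (min_le_left _ _) hzball
          have hballz : Metric.ball ((pr : ℝ) : ℂ) δ0 ∈
              𝓝[{w : ℂ | 0 < w.im}] ((z.re : ℝ) : ℂ) := by
            rw [← hzre]
            exact nhdsWithin_le_nhds (Metric.isOpen_ball.mem_nhds hzball0)
          filter_upwards [hballz, self_mem_nhdsWithin] with w hw1 hw2
          have hwL : w ∈ Lᶜ := fun hc => by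
            have := ((hmemL w).1 hc).1
            have hw2' : 0 < w.im := hw2
            linarith
          exact hb0' w hw1 hwL
        exact le_of_tendsto_of_tendsto hnorm hrhs hevb
      · rw [hgd z hzL]
        exact hb0' z (Metric.ball_subset_ball (min_le_left _ _) hzball) hzL
    -- convert the uniform bound to the required little-o estimate
    rw [Asymptotics.isLittleO_iff]
    intro c hc
    set G := ‖g ((pr : ℝ) : ℂ)‖ with hGdef
    have hG : 0 ≤ G := norm_nonneg _
    have hε1 : 0 < min ((c / (2*C))^2) (c / (2 * (G + 1))) :=
      lt_min (by positivity) (by positivity)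
    have hballmem : Metric.ball ((pr : ℝ) : ℂ) (min ((c / (2*C))^2) (c / (2 * (G + 1)))) ∈
        𝓝[≠] ((pr : ℝ) : ℂ) := nhdsWithin_le_nhds (Metric.ball_mem_nhds _ hε1)
    filter_upwards [hgev, hballmem, self_mem_nhdsWithin] with z hz1 hz2 hz3
    have hzne : z ≠ ((pr : ℝ) : ℂ) := hz3
    set r := ‖z - ((pr : ℝ) : ℂ)‖ with hrdef
    have hr : 0 < r := by rw [hrdef, norm_pos_iff]; exact sub_ne_zero.2 hzne
    have hrb : r < min ((c / (2*C))^2) (c / (2 * (G + 1))) := by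
      rw [hrdef, ← dist_eq_norm]
      exact Metric.mem_ball.1 hz2
    set q := Real.sqrt r with hqdef
    have hq : 0 < q := Real.sqrt_pos.2 hr
    have hqr : q * q = r := Real.mul_self_sqrt hr.le
    have hrpow : r ^ (-(1/2) : ℝ) = q⁻¹ := by
      rw [hqdef, Real.sqrt_eq_rpow, ← Real.rpow_neg hr.le]
    have hq_lt : q < c / (2*C) := by
      have h1 : r < (c / (2*C))^2 := lt_of_lt_of_le hrb (min_le_left _ _)
      have h2 := Real.sqrt_lt_sqrt hr.le h1
      rwa [Real.sqrt_sq (by positivity)] at h2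
    have hbound1 : ‖g z‖ ≤ C * q⁻¹ := by
      rw [← hrpow]
      exact hz1
    have hnormsub : ‖g z - g ((pr : ℝ) : ℂ)‖ ≤ C * q⁻¹ + G :=
      (norm_sub_le _ _).trans (add_le_add hbound1 le_rfl)
    have hstep : C * q⁻¹ + G ≤ c * r⁻¹ := by
      rw [show c * r⁻¹ = c / r from (div_eq_mul_inv c r).symm, le_div_iff₀ hr]
      have e1 : (C * q⁻¹ + G) * r = C * q + G * r := by
        rw [← hqr]
        field_simp
      rw [e1]
      have h2 : C * q ≤ c/2 := by
        calc C * q ≤ C * (c/(2*C)) := mul_le_mul_of_nonneg_left hq_lt.le hC.le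
          _ = c/2 := by field_simp
      have h3 : G * r ≤ c/2 := by
        have hrb2 : r ≤ c / (2*(G+1)) := (lt_of_lt_of_le hrb (min_le_right _ _)).le
        have e2 : G * (c/(2*(G+1))) = c/2 * (G/(G+1)) := by
          field_simp
        have e3 : G/(G+1) ≤ 1 := by
          rw [div_le_one (by positivity)]
          linarith
        calc G * r ≤ G * (c/(2*(G+1))) := mul_le_mul_of_nonneg_left hrb2 hG
          _ = c/2 * (G/(G+1)) := e2
          _ ≤ c/2 * 1 := mul_le_mul_of_nonneg_left e3 (by positivity)
          _ = c/2 := mul_one _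
      linarith
    have hrhs2 : ‖(z - ((pr : ℝ) : ℂ))⁻¹‖ = r⁻¹ := by rw [norm_inv]
    calc ‖g z - g ((pr : ℝ) : ℂ)‖ ≤ C * q⁻¹ + G := hnormsub
      _ ≤ c * r⁻¹ := hstep
      _ = c * ‖(z - ((pr : ℝ) : ℂ))⁻¹‖ := by rw [hrhs2]
  -- the global entire extension h
  set h : ℂ → ℂ := fun z => if z ∈ Send then limUnder (𝓝[≠] z) g else g z with hhdef
  have hh_diff : Differentiable ℂ h := by
    intro z
    by_cases hzS : z ∈ Send
    · have hopen2 : IsOpen ((↑Send : Set ℂ) \ {z})ᶜ :=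
        (hSfin.subset Set.diff_subset).isClosed.isOpen_compl
      obtain ⟨ρ, hρ, hball⟩ := Metric.isOpen_iff.1 hopen2 z (by simp)
      have hdiffg : DifferentiableOn ℂ g (Metric.ball z ρ \ {z}) := by
        intro u hu
        have huS : u ∈ (↑Send : Set ℂ)ᶜ := fun hc => (hball hu.1) ⟨hc, hu.2⟩
        exact (hg_an u huS).differentiableAt.differentiableWithinAt
      have hupd := Complex.differentiableOn_update_limUnder_of_isLittleO
        (Metric.ball_mem_nhds z hρ) hdiffg (hgbound z hzS)
      have heq : h =ᶠ[𝓝 z] Function.update g z (limUnder (𝓝[≠] z) g) := by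
        filter_upwards [Metric.ball_mem_nhds z hρ] with u hu
        rcases eq_or_ne u z with rfl | hne
        · rw [hhdef]; simp only [if_pos hzS, Function.update_self]
        · have huS : u ∉ Send := by
            intro hc
            exact (hball hu) ⟨by exact_mod_cast hc, by simpa using hne⟩
          rw [hhdef]; simp only [if_neg huS]
          rw [Function.update_of_ne hne]
      exact (heq.differentiableAt_iff).2
        (hupd.differentiableAt (Metric.ball_mem_nhds z hρ))
    · have hev : h =ᶠ[𝓝 z] g := by
        filter_upwards [hScl.isOpen_compl.mem_nhds (by simpa using hzS)] with u hu
        rw [hhdef]; simp only [if_neg (by simpa using hu : u ∉ Send)]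
      exact (hev.differentiableAt_iff).2 (hg_an z (by simpa using hzS)).differentiableAt
  have hh_tendsto : Tendsto h (Filter.cocompact ℂ) (𝓝 1) := by
    have hE : ∀ i j, Tendsto (fun z => M z i j) (Bornology.cobounded ℂ)
        (𝓝 ((1 : Matrix (Fin 2) (Fin 2) ℂ) i j)) := by
      intro i j
      have h1 : Tendsto (fun z => M z i j - (1 : Matrix (Fin 2) (Fin 2) ℂ) i j)
          (Bornology.cobounded ℂ) (𝓝 0) :=
        (hinf i j).trans_tendsto tendsto_inv₀_cobounded
      have h2 := h1.add_const ((1 : Matrix (Fin 2) (Fin 2) ℂ) i j)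
      simpa using h2
    have hdt : Tendsto d (Bornology.cobounded ℂ) (𝓝 1) := by
      have h2 := ((hE 0 0).mul (hE 1 1)).sub ((hE 0 1).mul (hE 1 0))
      rw [hdet2]
      simpa [Matrix.one_apply] using h2
    have hLb : Bornology.IsBounded L :=
      (isCompact_Icc.image Complex.continuous_ofReal).isBounded
    have hLc : Lᶜ ∈ Bornology.cobounded ℂ := Bornology.isBounded_def.1 hLb
    have heq : h =ᶠ[Bornology.cobounded ℂ] d := by
      filter_upwards [hLc] with z hz
      have hzS : z ∉ Send := fun hc => hz (hSsubL (by exact_mod_cast hc))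
      rw [hhdef]; simp only [if_neg hzS]
      exact hgd z hz
    have hfin := Filter.Tendsto.congr' heq.symm hdt
    rwa [Metric.cobounded_eq_cocompact] at hfin
  intro z hz
  have hzS : z ∉ (↑Send : Set ℂ) := fun hc => hz (hSsubL hc)
  have hone : h z = 1 := hh_diff.apply_eq_of_tendsto_cocompact z hh_tendsto
  calc (M z).det = d z := rfl
    _ = g z := (hgd z hz).symm
    _ = h z := by rw [hhdef]; simp only [if_neg (by simpa using hzS)]
    _ = 1 := hone
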